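/- arXiv:1911.05917 — 5 statements merged into one kernel-verified Lean document; each statement's English description precedes it below -/
import Mathlib

section
/- Let n ≥ 2 and let f:(0,∞)^n → (0,∞)^n be given by f_j(x) = ∏_{i≠j} x_i. Then f maps the open unit cube (0,1)^n bijectively onto the set { y ∈ (0,1)^n : ∏_{k=1}^n y_k < y_i^{n-1} for all i = 1,…,n }. -/
/-!
With `P = ∏ i, x i` we have `f_j(x) = P / x j` and `∏ j, f_j(x) = P ^ (n - 1)`, so `P` and then `x`
are recovered from `y = f(x)` as `P = (∏ y) ^ (1 / (n - 1))` and `x j = P / y j`. This explicit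
inverse is defined on all positive vectors, and `x j < 1` translates into `P < y j`, i.e.
`∏ y < y j ^ (n - 1)`.
-/

open Finset

variable {ι : Type*} [Fintype ι]

theorem card_sub_one_ne_zero [Nontrivial ι] : Fintype.card ι - 1 ≠ 0 :=
  Nat.sub_ne_zero_of_lt Fintype.one_lt_card

noncomputable def prodEraseInv (y : ι → ℝ) (j : ι) : ℝ :=
  (∏ i, y i) ^ ((Fintype.card ι - 1 : ℕ) : ℝ)⁻¹ / y j

theorem prodEraseInv_mem_Ioo [Nontrivial ι] {y : ι → ℝ} (hy : ∀ i, 0 < y i) {j : ι}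
    (hj : ∏ k, y k < y j ^ (Fintype.card ι - 1)) : prodEraseInv y j ∈ Set.Ioo 0 1 := by
  have hQ : 0 < ∏ i, y i := prod_pos fun i _ => hy i
  have hR0 : 0 < (∏ i, y i) ^ ((Fintype.card ι - 1 : ℕ) : ℝ)⁻¹ := Real.rpow_pos_of_pos hQ _
  refine ⟨div_pos hR0 (hy j), (div_lt_one (hy j)).mpr ?_⟩
  refine lt_of_pow_lt_pow_left₀ (Fintype.card ι - 1) (hy j).le ?_
  rwa [Real.rpow_inv_natCast_pow hQ.le card_sub_one_ne_zero]

variable [DecidableEq ι]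

def prodErase {M : Type*} [CommMonoid M] (x : ι → M) (j : ι) : M :=
  ∏ i ∈ univ.erase j, x i

theorem prod_prodErase {M : Type*} [CommMonoid M] (x : ι → M) :
    ∏ j, prodErase x j = (∏ i, x i) ^ (Fintype.card ι - 1) := by
  unfold prodErase
  rw [prod_comm' (t' := univ) (s' := fun i => univ.erase i) (by simp [ne_comm]), ← prod_pow]
  simp [card_erase_of_mem]

theorem prodErase_eq_div {M : Type*} [CommGroupWithZero M] {x : ι → M} {j : ι} (hx : x j ≠ 0) :
    prodErase x j = (∏ i, x i) / x j :=
  (eq_div_iff hx).mpr (prod_erase_mul _ _ (mem_univ j))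

section Nontrivial

variable [Nontrivial ι]

theorem prodErase_mem_Ioo {x : ι → ℝ} (hx : ∀ i, x i ∈ Set.Ioo 0 1) (j : ι) :
    prodErase x j ∈ Set.Ioo 0 1 := by
  refine ⟨prod_pos fun i _ => (hx i).1, ?_⟩
  calc prodErase x j < ∏ _i ∈ univ.erase j, (1 : ℝ) :=
        prod_lt_prod_of_nonempty (fun i _ => (hx i).1) (fun i _ => (hx i).2)
          univ_nontrivial.erase_nonempty
    _ = 1 := prod_const_one

theorem prod_prodErase_lt_pow {x : ι → ℝ} (hx : ∀ i, x i ∈ Set.Ioo 0 1) (j : ι) :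
    ∏ k, prodErase x k < prodErase x j ^ (Fintype.card ι - 1) := by
  have hP : 0 < ∏ i, x i := prod_pos fun i _ => (hx i).1
  rw [prod_prodErase, prodErase_eq_div (hx j).1.ne']
  refine pow_lt_pow_left₀ ?_ hP.le card_sub_one_ne_zero
  rw [lt_div_iff₀ (hx j).1]
  exact mul_lt_of_lt_one_right hP (hx j).2

theorem prodEraseInv_prodErase {x : ι → ℝ} (hx : ∀ i, 0 < x i) :
    prodEraseInv (prodErase x) = x := by
  funext j
  have hP : 0 < ∏ i, x i := prod_pos fun i _ => hx i
  rw [prodEraseInv, prod_prodErase, Real.pow_rpow_inv_natCast hP.le card_sub_one_ne_zero,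
    prodErase_eq_div (hx j).ne', div_div_cancel₀ hP.ne']

theorem prodErase_prodEraseInv {y : ι → ℝ} (hy : ∀ i, 0 < y i) :
    prodErase (prodEraseInv y) = y := by
  set Q := ∏ i, y i
  set R := Q ^ ((Fintype.card ι - 1 : ℕ) : ℝ)⁻¹
  have hQ : 0 < Q := prod_pos fun i _ => hy i
  have hR0 : 0 < R := Real.rpow_pos_of_pos hQ _
  have hRQ : R ^ (Fintype.card ι - 1) = Q := Real.rpow_inv_natCast_pow hQ.le card_sub_one_ne_zero
  have hprod : ∏ i, prodEraseInv y i = R := by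
    have hcard : Fintype.card ι = Fintype.card ι - 1 + 1 :=
      (Nat.sub_one_add_one Fintype.card_ne_zero).symm
    rw [show prodEraseInv y = fun i => R / y i from rfl, prod_div_distrib, prod_const, card_univ,
      hcard, pow_succ, hRQ, mul_div_cancel_left₀ _ hQ.ne']
  funext j
  have hj : prodEraseInv y j = R / y j := rfl
  rw [prodErase_eq_div (hj ▸ div_pos hR0 (hy j)).ne', hprod, hj, div_div_cancel₀ hR0.ne']

theorem bijOn_prodErase :
    Set.BijOn prodErase {x : ι → ℝ | ∀ i, x i ∈ Set.Ioo 0 1}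
      {y | (∀ i, y i ∈ Set.Ioo 0 1) ∧ ∀ i, ∏ k, y k < y i ^ (Fintype.card ι - 1)} :=
  Set.InvOn.bijOn (f' := prodEraseInv)
    ⟨fun _ hx => prodEraseInv_prodErase fun i => (hx i).1,
      fun _ hy => prodErase_prodEraseInv fun i => (hy.1 i).1⟩
    (fun _ hx => ⟨prodErase_mem_Ioo hx, prod_prodErase_lt_pow hx⟩)
    (fun _ hy j => prodEraseInv_mem_Ioo (fun i => (hy.1 i).1) (hy.2 j))

end Nontrivial

theorem product_map_bijOn_unit_cube (n : ℕ) (hn : 2 ≤ n) :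
    Set.BijOn (fun x : Fin n → ℝ => fun j : Fin n => ∏ i ∈ Finset.univ.erase j, x i)
      {x : Fin n → ℝ | ∀ i, x i ∈ Set.Ioo (0 : ℝ) 1}
      {y : Fin n → ℝ | (∀ i, y i ∈ Set.Ioo (0 : ℝ) 1) ∧ ∀ i, ∏ k, y k < y i ^ (n - 1)} := by
  have : Nontrivial (Fin n) := Fin.nontrivial_iff_two_le.mpr hn
  have h := bijOn_prodErase (ι := Fin n)
  rw [Fintype.card_fin] at h
  exact h
end

section
/- Let n ≥ 2 and consider the change of variables v_j = ∏_{i≠j} t_i on (0,∞)^n, with inverse t_i = (∏_{k=1}^n v_k)^{1/(n-1)} / v_i. The Jacobian determinant det(∂t_i/∂v_j) equals ((-1)^{n-1}/(n-1)) · (∏_{k=1}^n v_k)^{-(n-2)/(n-1)}, which also equals ((-1)^{n-1}/(n-1)) · (∏_{i=1}^n t_i)^{-(n-2)}. -/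
/-! With `c = 1/(n-1)`, differentiating `t_i = v_i⁻¹ (∏ v)^c` gives
`∂t_i/∂v_j = t_i (c - δ_ij) / v_j`, so the Jacobian is `diag t · (c𝟙𝟙ᵀ - I) · diag v⁻¹`.
The middle factor is a rank-one perturbation of `-I`, with determinant
`(-1)^n (1 - n c) = (-1)^(n-1) c`, and `∏ t_i = (∏ v)^c`; hence the determinant is
`(-1)^(n-1) c (∏ v)^(c-1)`, and `c - 1 = -(n-2)/(n-1)`. -/

open Finset

/-- The inverse map `t(v)` of the substitution `v_j = ∏_{i ≠ j} t_i`. -/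
noncomputable def invSubst (n : ℕ) (v : Fin n → ℝ) : Fin n → ℝ :=
  fun i => (v i)⁻¹ * (∏ k, v k) ^ (((n : ℝ) - 1)⁻¹)

theorem Matrix.det_of_const_sub_one {ι R : Type*} [Fintype ι] [DecidableEq ι] [CommRing R]
    (c : R) :
    (Matrix.of (fun _ _ : ι => c) - 1).det =
      (-1) ^ Fintype.card ι * (1 - Fintype.card ι * c) := by
  have h : Matrix.of (fun _ _ : ι => c) - 1 =
      -(1 + replicateCol Unit (fun _ : ι => -c) *
        replicateRow Unit (fun _ : ι => (1 : R))) := by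
    ext i j
    simp [one_apply, mul_apply]
    ring
  rw [h, det_neg, det_one_add_replicateCol_mul_replicateRow]
  simp [dotProduct]
  ring

theorem fderiv_prod_apply_single {ι : Type*} [Fintype ι] [DecidableEq ι] {v : ι → ℝ} {j : ι}
    (hv : v j ≠ 0) :
    fderiv ℝ (fun w : ι → ℝ => ∏ k, w k) v (Pi.single j 1) = (∏ k, v k) / v j := by
  rw [hasFDerivAt_finsetProd.fderiv, eq_div_iff hv, ← prod_erase_mul _ _ (mem_univ j)]
  simp [Pi.single_apply]

theorem fderiv_inv_mul_prod_rpow_apply_single {ι : Type*} [Fintype ι] [DecidableEq ι]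
    (p : ℝ) {v : ι → ℝ} (hv : ∀ i, 0 < v i) (i j : ι) :
    fderiv ℝ (fun w : ι → ℝ => (w i)⁻¹ * (∏ k, w k) ^ p) v (Pi.single j 1)
      = (v i)⁻¹ * (∏ k, v k) ^ p * ((p - if i = j then 1 else 0) / v j) := by
  have hP : 0 < ∏ k, v k := prod_pos fun k _ => hv k
  have hinv : HasFDerivAt (fun w : ι → ℝ => (w i)⁻¹) _ v :=
    (hasDerivAt_inv (hv i).ne').comp_hasFDerivAt v (hasFDerivAt_apply (𝕜 := ℝ) i v)
  have hrpow := (hasFDerivAt_finsetProd (u := univ) (x := v)).rpow_const (p := p) (Or.inl hP.ne')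
  have hmul : HasFDerivAt (fun w : ι → ℝ => (w i)⁻¹ * (∏ k, w k) ^ p) _ v := hinv.mul hrpow
  rw [hmul.fderiv, ← hasFDerivAt_finsetProd.fderiv]
  have hdiv := Real.rpow_sub_one hP.ne' p
  rcases eq_or_ne i j with rfl | hij
  · simp [fderiv_prod_apply_single (hv i).ne', hdiv]
    field_simp
    ring
  · simp [fderiv_prod_apply_single (hv j).ne', hdiv, hij]
    field_simp

theorem jacobian_invSubst {n : ℕ} {v : Fin n → ℝ} (hv : ∀ i, 0 < v i) :
    (Matrix.of fun i j : Fin n =>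
        fderiv ℝ (fun w : Fin n → ℝ => invSubst n w i) v (Pi.single j 1))
      = Matrix.diagonal (invSubst n v) * (Matrix.of (fun _ _ => ((n : ℝ) - 1)⁻¹) - 1) *
          Matrix.diagonal (fun j => (v j)⁻¹) := by
  ext i j
  simp [invSubst, fderiv_inv_mul_prod_rpow_apply_single _ hv, Matrix.one_apply]
  ring

theorem prod_invSubst {n : ℕ} (hn : n ≠ 1) {v : Fin n → ℝ} (hv : ∀ i, 0 < v i) :
    ∏ i, invSubst n v i = (∏ k, v k) ^ ((n : ℝ) - 1)⁻¹ := by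
  have hP : 0 < ∏ k, v k := prod_pos fun k _ => hv k
  have hn' : (n : ℝ) - 1 ≠ 0 := sub_ne_zero.mpr (by exact_mod_cast hn)
  have hexp : ((n : ℝ) - 1)⁻¹ * n - 1 = ((n : ℝ) - 1)⁻¹ := by
    field_simp
    ring
  rw [← hexp, Real.rpow_sub_one hP.ne', Real.rpow_mul hP.le, Real.rpow_natCast]
  simp [invSubst, prod_mul_distrib, prod_inv_distrib]
  ring

theorem det_jacobian_invSubst {n : ℕ} (hn : 2 ≤ n) {v : Fin n → ℝ} (hv : ∀ i, 0 < v i) :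
    (Matrix.of fun i j : Fin n =>
        fderiv ℝ (fun w : Fin n → ℝ => invSubst n w i) v (Pi.single j 1)).det
      = (-1) ^ (n - 1) / ((n : ℝ) - 1) * (∏ k, v k) ^ (-((n : ℝ) - 2) / ((n : ℝ) - 1)) := by
  have hP : 0 < ∏ k, v k := prod_pos fun k _ => hv k
  have hn' : (n : ℝ) - 1 ≠ 0 := sub_ne_zero.mpr (by norm_cast; omega)
  have hsign : (-1 : ℝ) ^ n = -(-1) ^ (n - 1) := by
    have h := pow_succ (-1 : ℝ) (n - 1)
    rw [Nat.sub_add_cancel (by omega)] at h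
    rw [h]
    ring
  have hexp : -((n : ℝ) - 2) / ((n : ℝ) - 1) = ((n : ℝ) - 1)⁻¹ - 1 := by
    field_simp
    ring
  rw [jacobian_invSubst hv, Matrix.det_mul, Matrix.det_mul, Matrix.det_diagonal,
    Matrix.det_diagonal, Matrix.det_of_const_sub_one, prod_invSubst (by omega) hv,
    prod_inv_distrib, Fintype.card_fin, hsign, hexp, Real.rpow_sub_one hP.ne']
  field_simp
  ring

theorem jacobian_of_inverse_substitution (n : ℕ) (hn : 2 ≤ n) (v : Fin n → ℝ)
    (hv : ∀ i, 0 < v i) :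
    (Matrix.of fun i j : Fin n =>
        fderiv ℝ (fun w : Fin n → ℝ => invSubst n w i) v (Pi.single j 1)).det
      = (-1) ^ (n - 1) / ((n : ℝ) - 1) * (∏ k, v k) ^ (-((n : ℝ) - 2) / ((n : ℝ) - 1)) ∧
    (Matrix.of fun i j : Fin n =>
        fderiv ℝ (fun w : Fin n → ℝ => invSubst n w i) v (Pi.single j 1)).det
      = (-1) ^ (n - 1) / ((n : ℝ) - 1) * (∏ i, invSubst n v i) ^ (-((n : ℝ) - 2)) := by
  have hdet := det_jacobian_invSubst hn hv
  refine ⟨hdet, hdet.trans ?_⟩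
  have hn' : (n : ℝ) - 1 ≠ 0 := sub_ne_zero.mpr (by norm_cast; omega)
  rw [prod_invSubst (by omega) hv, ← Real.rpow_mul (prod_pos fun k _ => hv k).le]
  congr 2
  field_simp
end

section
/- Let n ≥ 2, α > 0, and let l = (l_1,…,l_n) be real numbers with l_i < n−1 for all i, and set L = ∑ l_i. Then ∫_{[0,1]^n} (1 − α ∑_{i=1}^n ∏_{j≠i} t_j)^{N−n} ∏_{i=1}^n t_i^{n−2−l_i} dt = (α(N−n))^{−(n − L/(n−1))} · (n−1)^{−1} · ∫_D (1 − (∑ s_i)/(N−n))^{N−n} ∏_{i=1}^n s_i^{l_i − L/(n−1)} ds, where D = { s ∈ (0, α(N−n))^n : ∏_{j=1}^n s_j^{1/(n−1)} ≤ (α(N−n))^{1/(n−1)} s_i for all i }. -/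
/-!
Put `c = α (N - n)` and `s_i = c ∏_{j ≠ i} t_j`. Since `∏_i s_i = c ^ n (∏_j t_j) ^ (n - 1)`, the
map is inverted on positive vectors by `t_i = (∏_j s_j) ^ (1/(n-1)) / (c ^ (1/(n-1)) s_i)`, so it
maps `(0,1)^n` bijectively onto the domain `D` with strict inequalities; the non-strict ones add
only pieces of graphs over the remaining coordinates, which are null. The Jacobian matrix is
`c ∏ t • diag(t)⁻¹ (J - 1) diag(t)⁻¹` with `J` the all-ones matrix, so its determinant has absolute
value `(n - 1) c ^ n (∏ t) ^ (n - 2)`; as the exponents `l_i - L/(n-1)` sum to `-L/(n-1)`, the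
change of variables formula turns one integrand into the other.
-/

open Finset MeasureTheory

section ProdErase

variable {ι : Type*} [Fintype ι] [DecidableEq ι]

theorem prod_prod_erase_comm {M : Type*} [CommMonoid M] (f : ι → ι → M) :
    ∏ i, ∏ j ∈ univ.erase i, f i j = ∏ j, ∏ i ∈ univ.erase j, f i j :=
  prod_comm' fun i j => by simp [ne_comm]

def prodEraseMap (c : ℝ) (t : ι → ℝ) (i : ι) : ℝ := c * ∏ j ∈ univ.erase i, t j

theorem prod_prodEraseMap_rpow {c : ℝ} (hc : 0 < c) {t : ι → ℝ} (ht : ∀ i, 0 < t i)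
    (e : ι → ℝ) :
    ∏ i, prodEraseMap c t i ^ e i = c ^ (∑ i, e i) * ∏ i, t i ^ (∑ j, e j - e i) := by
  simp_rw [prodEraseMap, Real.mul_rpow hc.le (prod_nonneg fun j _ => (ht j).le),
    prod_mul_distrib, ← Real.rpow_sum_of_pos hc, ← Real.finsetProd_rpow _ _ fun j _ => (ht j).le,
    prod_prod_erase_comm fun i j => t j ^ e i, ← Real.rpow_sum_of_pos (ht _),
    sum_erase_eq_sub (mem_univ _)]

theorem hasFDerivAt_prodEraseMap (c : ℝ) (t : ι → ℝ) :
    HasFDerivAt (prodEraseMap c)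
      (ContinuousLinearMap.pi fun i => c • ∑ k ∈ univ.erase i,
        (∏ j ∈ (univ.erase i).erase k, t j) • (ContinuousLinearMap.proj k : (ι → ℝ) →L[ℝ] ℝ))
      t :=
  hasFDerivAt_pi'.2 fun _ =>
    (HasFDerivAt.finsetProd fun k _ => hasFDerivAt_apply k t).const_mul c

theorem toMatrix'_fderiv_prodEraseMap (c : ℝ) {t : ι → ℝ} (ht : ∀ i, t i ≠ 0) :
    LinearMap.toMatrix' (fderiv ℝ (prodEraseMap c) t : (ι → ℝ) →ₗ[ℝ] ι → ℝ) =
      (c * ∏ i, t i) • (Matrix.diagonal t⁻¹ * (Matrix.of (fun _ _ => (1 : ℝ)) - 1) *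
        Matrix.diagonal t⁻¹) := by
  ext i k
  rw [(hasFDerivAt_prodEraseMap c t).fderiv]
  rcases eq_or_ne k i with rfl | hki
  · simp [Pi.single_apply]
  · have hk : k ∈ univ.erase i := mem_erase.2 ⟨hki, mem_univ k⟩
    simp [Pi.single_apply, hki.symm, ← mul_prod_erase _ t (mem_univ i), ← mul_prod_erase _ t hk]
    field_simp [ht i, ht k]

theorem det_ones_sub_one {R : Type*} [CommRing R] :
    (Matrix.of (fun _ _ => (1 : R)) - 1 : Matrix ι ι R).det
      = (-1) ^ Fintype.card ι * (1 - Fintype.card ι) := by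
  have h : (Matrix.of (fun _ _ => (1 : R)) - 1 : Matrix ι ι R)
      = -(1 + Matrix.replicateCol Unit (fun _ => (-1 : R)) *
          Matrix.replicateRow Unit (fun _ => (1 : R))) := by
    ext i k
    simp [Matrix.one_apply, Matrix.mul_apply]
    split_ifs <;> ring
  rw [h, Matrix.det_neg, Matrix.det_one_add_replicateCol_mul_replicateRow]
  simp [dotProduct, sub_eq_add_neg]

theorem det_fderiv_prodEraseMap (hι : 2 ≤ Fintype.card ι) (c : ℝ) {t : ι → ℝ}
    (ht : ∀ i, t i ≠ 0) :
    (fderiv ℝ (prodEraseMap c) t).det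
      = (-1) ^ Fintype.card ι * (1 - Fintype.card ι) * c ^ Fintype.card ι *
        (∏ i, t i) ^ (Fintype.card ι - 2) := by
  have hP : ∏ i, t i ≠ 0 := prod_ne_zero_iff.2 fun i _ => ht i
  obtain ⟨m, hm⟩ := Nat.exists_eq_add_of_le' hι
  rw [ContinuousLinearMap.det, ← LinearMap.det_toMatrix', toMatrix'_fderiv_prodEraseMap c ht,
    Matrix.det_smul, Matrix.det_mul, Matrix.det_mul, Matrix.det_diagonal, det_ones_sub_one,
    Pi.inv_def, prod_inv_distrib, hm, Nat.add_sub_cancel]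
  field_simp
  ring

theorem volume_setOf_apply_eq_eq_zero (i : ι) {F : ({j // j ≠ i} → ℝ) → ℝ}
    (hF : Measurable F) : volume {s : ι → ℝ | s i = F fun j => s j} = 0 := by
  set B : Set (({j // j ≠ i} → ℝ) × ({j // ¬j ≠ i} → ℝ)) := {p | p.2 ⟨i, not_not.2 rfl⟩ = F p.1}
  have hB : MeasurableSet B :=
    measurableSet_eq_fun ((measurable_pi_apply _).comp measurable_snd) (hF.comp measurable_fst)
  rw [show {s : ι → ℝ | s i = F fun j => s j} =
      MeasurableEquiv.piEquivPiSubtypeProd (fun _ => ℝ) (· ≠ i) ⁻¹' B from rfl,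
    (volume_preserving_piEquivPiSubtypeProd _ _).measure_preimage hB.nullMeasurableSet,
    Measure.volume_eq_prod, Measure.measure_prod_null hB]
  exact Filter.Eventually.of_forall fun y =>
    Measure.pi_hyperplane (fun _ : {j // ¬j ≠ i} => (volume : Measure ℝ)) ⟨i, not_not.2 rfl⟩ (F y)

theorem volume_setOf_prod_rpow_eq_mul_eq_zero [Nontrivial ι] {β : ℝ} (hβ : β ≠ 0) (a : ℝ)
    (i : ι) : volume {s : ι → ℝ | (∀ k, 0 < s k) ∧ ∏ j, s j ^ β = a * s i} = 0 := by
  obtain ⟨j₀, hj₀⟩ := exists_ne i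
  refine measure_mono_null (fun s ⟨hs, hsβ⟩ => ?_) (volume_setOf_apply_eq_eq_zero j₀
    (F := fun y => (a * y ⟨i, hj₀.symm⟩ / ∏ k, y k ^ β) ^ β⁻¹) (by fun_prop))
  have hrest : 0 < ∏ k ∈ univ.erase j₀, s k ^ β :=
    prod_pos fun k _ => Real.rpow_pos_of_pos (hs k) β
  have hj₀β : s j₀ ^ β = a * s i / ∏ k ∈ univ.erase j₀, s k ^ β := by
    rw [eq_div_iff hrest.ne', ← hsβ, mul_prod_erase _ (fun j => s j ^ β) (mem_univ j₀)]
  show s j₀ = (a * s i / ∏ k : {k // k ≠ j₀}, s k ^ β) ^ β⁻¹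
  rw [← prod_subtype (p := (· ≠ j₀)) (univ.erase j₀) (by simp) fun k => s k ^ β, ← hj₀β,
    Real.rpow_rpow_inv (hs j₀).le hβ]

theorem setOf_prod_rpow_le_ae_eq_setOf_prod_rpow_lt [Nontrivial ι] {β : ℝ} (hβ : β ≠ 0)
    (b a : ℝ) :
    {s : ι → ℝ | (∀ i, s i ∈ Set.Ioo 0 b) ∧ ∀ i, ∏ j, s j ^ β ≤ a * s i}
      =ᵐ[volume] {s : ι → ℝ | (∀ i, s i ∈ Set.Ioo 0 b) ∧ ∀ i, ∏ j, s j ^ β < a * s i} := by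
  have hsub : {s : ι → ℝ | (∀ i, s i ∈ Set.Ioo 0 b) ∧ ∀ i, ∏ j, s j ^ β < a * s i} ⊆
      {s | (∀ i, s i ∈ Set.Ioo 0 b) ∧ ∀ i, ∏ j, s j ^ β ≤ a * s i} :=
    fun s hs => ⟨hs.1, fun i => (hs.2 i).le⟩
  refine ae_eq_set.2 ⟨measure_mono_null (fun s ⟨⟨hb, hle⟩, hlt⟩ => ?_)
    (measure_iUnion_null fun i => volume_setOf_prod_rpow_eq_mul_eq_zero hβ a i),
    by rw [Set.sdiff_eq_empty.2 hsub, measure_empty]⟩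
  obtain ⟨i, hi⟩ : ∃ i, a * s i ≤ ∏ j, s j ^ β := by
    by_contra! h
    exact hlt ⟨hb, h⟩
  exact Set.mem_iUnion.2 ⟨i, fun k => (hb k).1, le_antisymm (hle i) hi⟩

end ProdErase

section Fin

variable {n : ℕ}

theorem rpow_inv_sub_one_pow (hn : 2 ≤ n) {x : ℝ} (hx : 0 ≤ x) :
    (x ^ ((n : ℝ) - 1)⁻¹) ^ (n - 1) = x := by
  rw [← Nat.cast_pred (by omega)]
  exact Real.rpow_inv_natCast_pow hx (by omega)

theorem prod_prodEraseMap_rpow_inv_sub_one (hn : 2 ≤ n) {c : ℝ} (hc : 0 < c)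
    {t : Fin n → ℝ} (ht : ∀ i, 0 < t i) :
    ∏ i, prodEraseMap c t i ^ ((n : ℝ) - 1)⁻¹ = c * c ^ ((n : ℝ) - 1)⁻¹ * ∏ i, t i := by
  have hn1 : (n : ℝ) - 1 ≠ 0 := (sub_pos.2 (by exact_mod_cast hn : (1 : ℝ) < n)).ne'
  rw [prod_prodEraseMap_rpow hc ht, sum_const, card_univ, Fintype.card_fin, nsmul_eq_mul,
    show (n : ℝ) * ((n : ℝ) - 1)⁻¹ = 1 + ((n : ℝ) - 1)⁻¹ by field_simp; ring,
    show 1 + ((n : ℝ) - 1)⁻¹ - ((n : ℝ) - 1)⁻¹ = 1 by ring, Real.rpow_add hc]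
  simp only [Real.rpow_one]

noncomputable def prodEraseMapInv (c : ℝ) (s : Fin n → ℝ) (i : Fin n) : ℝ :=
  (∏ j, s j ^ ((n : ℝ) - 1)⁻¹) / (c ^ ((n : ℝ) - 1)⁻¹ * s i)

theorem mapsTo_prodEraseMap (hn : 2 ≤ n) {c : ℝ} (hc : 0 < c) :
    Set.MapsTo (prodEraseMap c) (Set.univ.pi fun _ : Fin n => Set.Ioo (0 : ℝ) 1)
      {s : Fin n → ℝ | (∀ i, s i ∈ Set.Ioo 0 c) ∧
        ∀ i, ∏ j, s j ^ ((n : ℝ) - 1)⁻¹ < c ^ ((n : ℝ) - 1)⁻¹ * s i} := by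
  intro t ht
  simp only [Set.mem_pi, Set.mem_univ, true_implies, Set.mem_Ioo] at ht
  have hpos (i : Fin n) : 0 < ∏ j ∈ univ.erase i, t j := prod_pos fun j _ => (ht j).1
  have hlt (i : Fin n) : ∏ j ∈ univ.erase i, t j < 1 := by
    simpa using prod_lt_prod_of_nonempty (g := 1) (fun j _ => (ht j).1) (fun j _ => (ht j).2)
      (card_pos.1 (by simp; omega))
  refine ⟨fun i => ⟨mul_pos hc (hpos i), mul_lt_of_lt_one_right hc (hlt i)⟩, fun i => ?_⟩
  rw [prod_prodEraseMap_rpow_inv_sub_one hn hc fun j => (ht j).1, prodEraseMap,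
    ← mul_prod_erase _ t (mem_univ i)]
  have : 0 < c * c ^ ((n : ℝ) - 1)⁻¹ := by positivity
  nlinarith [mul_lt_of_lt_one_left (hpos i) (ht i).2]

theorem mapsTo_prodEraseMapInv {c : ℝ} (hc : 0 < c) :
    Set.MapsTo (prodEraseMapInv c)
      {s : Fin n → ℝ | (∀ i, s i ∈ Set.Ioo 0 c) ∧
        ∀ i, ∏ j, s j ^ ((n : ℝ) - 1)⁻¹ < c ^ ((n : ℝ) - 1)⁻¹ * s i}
      (Set.univ.pi fun _ : Fin n => Set.Ioo (0 : ℝ) 1) := by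
  rintro s ⟨hs, hlt⟩ i -
  have hsi : 0 < c ^ ((n : ℝ) - 1)⁻¹ * s i := by have := (hs i).1; positivity
  exact ⟨div_pos (prod_pos fun j _ => Real.rpow_pos_of_pos (hs j).1 _) hsi,
    (div_lt_one hsi).2 (hlt i)⟩

theorem leftInvOn_prodEraseMapInv (hn : 2 ≤ n) {c : ℝ} (hc : 0 < c) :
    Set.LeftInvOn (prodEraseMapInv c) (prodEraseMap c)
      (Set.univ.pi fun _ : Fin n => Set.Ioo (0 : ℝ) 1) := by
  intro t ht
  simp only [Set.mem_pi, Set.mem_univ, true_implies, Set.mem_Ioo] at ht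
  funext i
  have hpos : 0 < ∏ j ∈ univ.erase i, t j := prod_pos fun j _ => (ht j).1
  rw [prodEraseMapInv, prod_prodEraseMap_rpow_inv_sub_one hn hc fun j => (ht j).1, prodEraseMap,
    ← mul_prod_erase _ t (mem_univ i)]
  field_simp

theorem rightInvOn_prodEraseMapInv (hn : 2 ≤ n) {c : ℝ} (hc : 0 < c) :
    Set.RightInvOn (prodEraseMapInv c) (prodEraseMap c)
      {s : Fin n → ℝ | (∀ i, s i ∈ Set.Ioo 0 c) ∧
        ∀ i, ∏ j, s j ^ ((n : ℝ) - 1)⁻¹ < c ^ ((n : ℝ) - 1)⁻¹ * s i} := by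
  rintro s ⟨hs, -⟩
  funext i
  have hcard : (univ.erase i).card = n - 1 := by simp
  have hsi : 0 < s i := (hs i).1
  have hrest : 0 < ∏ j ∈ univ.erase i, s j := prod_pos fun j _ => (hs j).1
  simp only [prodEraseMap, prodEraseMapInv]
  rw [prod_div_distrib, prod_mul_distrib, prod_const, prod_const, hcard,
    Real.finsetProd_rpow _ _ fun j _ => (hs j).1.le,
    rpow_inv_sub_one_pow hn (prod_nonneg fun j _ => (hs j).1.le), rpow_inv_sub_one_pow hn hc.le,
    ← mul_prod_erase _ s (mem_univ i)]
  field_simp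

theorem bijOn_prodEraseMap (hn : 2 ≤ n) {c : ℝ} (hc : 0 < c) :
    Set.BijOn (prodEraseMap c) (Set.univ.pi fun _ : Fin n => Set.Ioo (0 : ℝ) 1)
      {s : Fin n → ℝ | (∀ i, s i ∈ Set.Ioo 0 c) ∧
        ∀ i, ∏ j, s j ^ ((n : ℝ) - 1)⁻¹ < c ^ ((n : ℝ) - 1)⁻¹ * s i} :=
  Set.InvOn.bijOn ⟨leftInvOn_prodEraseMapInv hn hc, rightInvOn_prodEraseMapInv hn hc⟩
    (mapsTo_prodEraseMap hn hc) (mapsTo_prodEraseMapInv hc)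

theorem abs_det_fderiv_prodEraseMap_mul_prod_rpow (hn : 2 ≤ n) {c : ℝ} (hc : 0 < c)
    {t : Fin n → ℝ} (ht : ∀ i, 0 < t i) (l : Fin n → ℝ) :
    |(fderiv ℝ (prodEraseMap c) t).det| *
        ∏ i, prodEraseMap c t i ^ (l i - (∑ j, l j) / ((n : ℝ) - 1))
      = ((n : ℝ) - 1) * c ^ ((n : ℝ) - (∑ j, l j) / ((n : ℝ) - 1)) *
        ∏ i, t i ^ ((n : ℝ) - 2 - l i) := by
  have hn1 : (0 : ℝ) < n - 1 := sub_pos.2 (by exact_mod_cast hn)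
  have hP : 0 < ∏ i, t i := prod_pos fun i _ => ht i
  set γ := (∑ j, l j) / ((n : ℝ) - 1)
  have hsum : ∑ i, (l i - γ) = -γ := by
    rw [sum_sub_distrib, sum_const, card_univ, Fintype.card_fin, nsmul_eq_mul]
    linear_combination -(div_mul_cancel₀ (∑ j, l j) hn1.ne')
  have hdet := det_fderiv_prodEraseMap (by simpa using hn) c fun i => (ht i).ne'
  rw [Fintype.card_fin] at hdet
  have hc_pow : c ^ ((n : ℝ) - γ) = c ^ n * c ^ (-γ) := by
    rw [sub_eq_add_neg, Real.rpow_add hc, Real.rpow_natCast]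
  have ht_pow (i : Fin n) :
      t i ^ ((n : ℝ) - 2 - l i) = t i ^ (n - 2) * t i ^ (-γ - (l i - γ)) := by
    rw [show (n : ℝ) - 2 - l i = ((n - 2 : ℕ) : ℝ) + (-γ - (l i - γ)) by
      rw [Nat.cast_sub hn]; push_cast; ring, Real.rpow_add (ht i), Real.rpow_natCast]
  simp only [hdet, prod_prodEraseMap_rpow hc ht, hsum, hc_pow, ht_pow, prod_mul_distrib,
    prod_pow, abs_mul, abs_pow, abs_neg, abs_one, one_pow, one_mul, abs_sub_comm (1 : ℝ),
    abs_of_pos hc, abs_of_pos hP, abs_of_pos hn1]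
  ring

end Fin

theorem substitution_identity_general (n N : ℕ) (hn : 2 ≤ n) (hN : n < N) (α : ℝ) (hα : 0 < α)
    (l : Fin n → ℝ) (L : ℝ) (hL : L = ∑ i, l i) :
    (∫ t in Set.univ.pi fun _ : Fin n => Set.Ioo (0 : ℝ) 1,
        (1 - α * ∑ i, ∏ j ∈ Finset.univ.erase i, t j) ^ (N - n) *
          ∏ i, (t i) ^ ((n : ℝ) - 2 - l i))
      = (α * ((N : ℝ) - n)) ^ (-((n : ℝ) - L / ((n : ℝ) - 1))) * ((n : ℝ) - 1)⁻¹ *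
        ∫ s in {s : Fin n → ℝ |
            (∀ i, s i ∈ Set.Ioo (0 : ℝ) (α * ((N : ℝ) - n))) ∧
            ∀ i, ∏ j, (s j) ^ (((n : ℝ) - 1)⁻¹)
              ≤ (α * ((N : ℝ) - n)) ^ (((n : ℝ) - 1)⁻¹) * s i},
          (1 - (∑ i, s i) / ((N : ℝ) - n)) ^ (N - n) *
            ∏ i, (s i) ^ (l i - L / ((n : ℝ) - 1)) := by
  subst hL
  have hNn : (0 : ℝ) < N - n := sub_pos.2 (by exact_mod_cast hN)
  set c := α * ((N : ℝ) - n) with hc_def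
  have hc : 0 < c := mul_pos hα hNn
  have hn1 : (0 : ℝ) < n - 1 := sub_pos.2 (by exact_mod_cast hn)
  have : Nontrivial (Fin n) := Fin.nontrivial_iff_two_le.2 hn
  have hU : MeasurableSet (Set.univ.pi fun _ : Fin n => Set.Ioo (0 : ℝ) 1) :=
    MeasurableSet.univ_pi fun _ => measurableSet_Ioo
  rw [setIntegral_congr_set
      (setOf_prod_rpow_le_ae_eq_setOf_prod_rpow_lt (inv_ne_zero hn1.ne') c _),
    ← (bijOn_prodEraseMap hn hc).image_eq,
    integral_image_eq_integral_abs_det_fderiv_smul volume hU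
      (fun t _ => (hasFDerivAt_prodEraseMap c t).differentiableAt.hasFDerivAt.hasFDerivWithinAt)
      (bijOn_prodEraseMap hn hc).injOn,
    ← integral_const_mul]
  refine setIntegral_congr_fun hU fun t ht => ?_
  have hsum : (∑ i, prodEraseMap c t i) / ((N : ℝ) - n) = α * ∑ i, ∏ j ∈ univ.erase i, t j := by
    simp only [prodEraseMap, ← mul_sum, hc_def]
    field_simp
  rw [smul_eq_mul, mul_left_comm |_|,
    abs_det_fderiv_prodEraseMap_mul_prod_rpow hn hc (fun i => (ht i trivial).1), hsum,
    Real.rpow_neg hc.le]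
  field_simp

theorem substitution_identity (n N : ℕ) (hn : 2 ≤ n) (hN : n < N) (α : ℝ) (hα : 0 < α)
    (l : Fin n → ℝ) (hl : ∀ i, l i < (n : ℝ) - 1) (L : ℝ) (hL : L = ∑ i, l i) :
    (∫ t in Set.univ.pi fun _ : Fin n => Set.Ioo (0 : ℝ) 1,
        (1 - α * ∑ i, ∏ j ∈ Finset.univ.erase i, t j) ^ (N - n) *
          ∏ i, (t i) ^ ((n : ℝ) - 2 - l i))
      = (α * ((N : ℝ) - n)) ^ (-((n : ℝ) - L / ((n : ℝ) - 1))) * ((n : ℝ) - 1)⁻¹ *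
        ∫ s in {s : Fin n → ℝ |
            (∀ i, s i ∈ Set.Ioo (0 : ℝ) (α * ((N : ℝ) - n))) ∧
            ∀ i, ∏ j, (s j) ^ (((n : ℝ) - 1)⁻¹)
              ≤ (α * ((N : ℝ) - n)) ^ (((n : ℝ) - 1)⁻¹) * s i},
          (1 - (∑ i, s i) / ((N : ℝ) - n)) ^ (N - n) *
            ∏ i, (s i) ^ (l i - L / ((n : ℝ) - 1)) :=
  substitution_identity_general n N hn hN α hα l L hL
end

section
/- Let m ≥ 3, k ≥ 0 an integer, 0 < a < b ≤ 1 with a = ((s_1⋯s_{m−1})/(α(N−n)))^{1/(m−2)} and b = s_{m−1}, and let S be a real number with 0 ≤ S ≤ 1/2. Then the integral ∫_a^b (1 − S − s/(N−n))^{N−n} s^{−1}(−ln s)^k ds is bounded above by (1−S)^{N−n}/(k+1) · ((−ln a)^{k+1} − (−ln b)^{k+1}), and bounded below by (1−S)^{N−n}/(k+1) · ((−ln a)^{k+1} − (−ln b)^{k+1} − 2Γ(k+2)), provided b ≤ 1 and 0 < a < b. -/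
/-!
On `[a, b] ⊆ (0, 1]` and with `c = 1 - S ≥ 1/2`, `M = N - n`, the factor `(c - x / M) ^ M` lies
between `c ^ M (1 - 2x)` (Bernoulli) and `c ^ M`. Against the weight `x⁻¹ (-log x) ^ k`, whose
primitive is `-(-log x) ^ (k + 1) / (k + 1)`, the upper bound integrates exactly, and the correction
`2x · x⁻¹ (-log x) ^ k = 2 (-log x) ^ k` integrates to at most `2 k! = 2 Γ(k + 2) / (k + 1)`.
-/

open Real Set MeasureTheory
open scoped Nat

lemma hasDerivAt_neg_log_pow_succ (k : ℕ) {x : ℝ} (hx : x ≠ 0) :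
    HasDerivAt (fun y => (-log y) ^ (k + 1)) (-((k + 1) * (-log x) ^ k * x⁻¹)) x := by
  refine (((hasDerivAt_log hx).neg).pow (k + 1)).congr_deriv ?_
  simp only [Pi.neg_apply]
  push_cast
  ring

section

variable {a b : ℝ}

lemma ne_zero_of_mem_uIcc (ha : 0 < a) (hb : 0 < b) : ∀ x ∈ uIcc a b, x ≠ 0 :=
  fun _ hx => ((lt_min ha hb).trans_le hx.1).ne'

lemma intervalIntegrable_neg_log_pow (k : ℕ) (ha : 0 < a) (hb : 0 < b) :
    IntervalIntegrable (fun x => (-log x) ^ k) volume a b :=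
  ContinuousOn.intervalIntegrable <| by
    fun_prop (disch := exact ne_zero_of_mem_uIcc ha hb)

lemma intervalIntegrable_inv_mul_neg_log_pow (k : ℕ) (ha : 0 < a) (hb : 0 < b) :
    IntervalIntegrable (fun x => x⁻¹ * (-log x) ^ k) volume a b :=
  ContinuousOn.intervalIntegrable <| by
    fun_prop (disch := exact ne_zero_of_mem_uIcc ha hb)

lemma integral_inv_mul_neg_log_pow (k : ℕ) (ha : 0 < a) (hb : 0 < b) :
    ∫ x in a..b, x⁻¹ * (-log x) ^ k = ((-log a) ^ (k + 1) - (-log b) ^ (k + 1)) / (k + 1) := by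
  have hne : ∀ x ∈ uIcc a b, x ≠ 0 := ne_zero_of_mem_uIcc ha hb
  have hderiv : ∀ x ∈ uIcc a b,
      HasDerivAt (fun y => -(-log y) ^ (k + 1) / (k + 1)) (x⁻¹ * (-log x) ^ k) x := by
    intro x hx
    refine (((hasDerivAt_neg_log_pow_succ k (hne x hx)).neg).div_const ((k : ℝ) + 1)).congr_deriv ?_
    field_simp
  rw [intervalIntegral.integral_eq_sub_of_hasDerivAt hderiv
    (intervalIntegrable_inv_mul_neg_log_pow k ha hb)]
  ring

lemma neg_log_pow_nonneg (k : ℕ) {x : ℝ} (hx0 : 0 ≤ x) (hx1 : x ≤ 1) : 0 ≤ (-log x) ^ k :=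
  pow_nonneg (neg_nonneg.mpr (log_nonpos hx0 hx1)) k

/-- Integrating by parts, `∫ₐ¹ (-log x)^(k+1) = -a (-log a)^(k+1) + (k+1) ∫ₐ¹ (-log x)^k`. -/
lemma integral_neg_log_pow_to_one_le_factorial (k : ℕ) (ha : 0 < a) (ha1 : a ≤ 1) :
    ∫ x in a..1, (-log x) ^ k ≤ k ! := by
  have hne : ∀ x ∈ uIcc a 1, x ≠ 0 := ne_zero_of_mem_uIcc ha one_pos
  have hint (j : ℕ) := intervalIntegrable_neg_log_pow j ha one_pos
  induction k with
  | zero => simpa using ha.le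
  | succ k ih =>
    have hderiv : ∀ x ∈ uIcc a 1, HasDerivAt (fun y => y * (-log y) ^ (k + 1))
        ((-log x) ^ (k + 1) - (k + 1) * (-log x) ^ k) x := by
      intro x hx
      refine ((hasDerivAt_id x).mul (hasDerivAt_neg_log_pow_succ k (hne x hx))).congr_deriv ?_
      simp only [id]
      field_simp [hne x hx]
      ring
    have hparts := intervalIntegral.integral_eq_sub_of_hasDerivAt hderiv
      ((hint _).sub ((hint k).const_mul _))
    rw [intervalIntegral.integral_sub (hint _) ((hint k).const_mul _),
      intervalIntegral.integral_const_mul] at hparts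
    have hboundary : 0 ≤ a * (-log a) ^ (k + 1) := mul_nonneg ha.le (neg_log_pow_nonneg _ ha.le ha1)
    rw [log_one, neg_zero, zero_pow k.succ_ne_zero, mul_zero, zero_sub] at hparts
    push_cast [Nat.factorial_succ]
    linarith [mul_le_mul_of_nonneg_left ih (by positivity : (0 : ℝ) ≤ k + 1)]

lemma integral_neg_log_pow_le_factorial (k : ℕ) (ha : 0 < a) (hab : a ≤ b) (hb1 : b ≤ 1) :
    ∫ x in a..b, (-log x) ^ k ≤ k ! := by
  refine (intervalIntegral.integral_mono_interval le_rfl hab hb1 ?_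
    (intervalIntegrable_neg_log_pow k ha one_pos)).trans
    (integral_neg_log_pow_to_one_le_factorial k ha (hab.trans hb1))
  exact (ae_restrict_mem measurableSet_Ioc).mono fun x hx =>
    neg_log_pow_nonneg k (ha.trans hx.1).le hx.2

end

section

variable {c x : ℝ}

lemma pow_sub_div_le_pow (M : ℕ) (hc : 1 / 2 ≤ c) (hx0 : 0 ≤ x) (hx1 : x ≤ 1) :
    (c - x / M) ^ M ≤ c ^ M := by
  have hxM : x / M ≤ x := by
    rcases M.eq_zero_or_pos with rfl | hM
    · simpa using hx0
    · exact div_le_self hx0 (by exact_mod_cast hM)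
  have habs : |c - x / M| ≤ c :=
    abs_le.mpr ⟨by linarith, by linarith [div_nonneg hx0 M.cast_nonneg]⟩
  calc (c - x / M) ^ M ≤ |c - x / M| ^ M := (le_abs_self _).trans (abs_pow _ _).le
    _ ≤ c ^ M := pow_le_pow_left₀ (abs_nonneg _) habs M

/-- Bernoulli's inequality applied to `(1 - x / (c M)) ^ M`. -/
lemma pow_mul_one_sub_two_mul_le (M : ℕ) (hc : 1 / 2 ≤ c) (hx0 : 0 ≤ x) (hx1 : x ≤ 1) :
    c ^ M * (1 - 2 * x) ≤ (c - x / M) ^ M := by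
  rcases M.eq_zero_or_pos with rfl | hM
  · simpa using hx0
  have hc0 : 0 < c := by linarith
  have hM1 : (1 : ℝ) ≤ M := by exact_mod_cast hM
  have hxc : x / c ≤ 2 * x := by rw [div_le_iff₀ hc0]; nlinarith
  have hxcM : x / (c * M) ≤ x / c :=
    div_le_div_of_nonneg_left hx0 hc0 (le_mul_of_one_le_right hc0.le hM1)
  have hbern : 1 - 2 * x ≤ (1 - x / (c * M)) ^ M := by
    have := one_add_mul_le_pow (a := -(x / (c * M))) (by linarith) M
    have hMc : (M : ℝ) * (x / (c * M)) = x / c := by field_simp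
    rw [mul_neg, hMc, ← sub_eq_add_neg, ← sub_eq_add_neg] at this
    linarith
  calc c ^ M * (1 - 2 * x) ≤ c ^ M * (1 - x / (c * M)) ^ M := by gcongr
    _ = (c - x / M) ^ M := by
      rw [← mul_pow]
      field_simp

end

lemma Gamma_natCast_add_two (k : ℕ) : Gamma (k + 2) = (k + 1) * k ! := by
  rw [show (k : ℝ) + 2 = (k + 1 : ℕ) + 1 by push_cast; ring, Gamma_nat_eq_factorial,
    Nat.factorial_succ]
  push_cast
  ring

section

variable {a b c : ℝ} (M k : ℕ)

lemma integral_pow_sub_div_mul_inv_mul_neg_log_pow_le (hc : 1 / 2 ≤ c) (ha : 0 < a) (hab : a ≤ b)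
    (hb1 : b ≤ 1) :
    ∫ x in a..b, (c - x / M) ^ M * x⁻¹ * (-log x) ^ k
      ≤ c ^ M / (k + 1) * ((-log a) ^ (k + 1) - (-log b) ^ (k + 1)) := by
  have hb : 0 < b := ha.trans_le hab
  have hne : ∀ x ∈ uIcc a b, x ≠ 0 := ne_zero_of_mem_uIcc ha hb
  calc ∫ x in a..b, (c - x / M) ^ M * x⁻¹ * (-log x) ^ k
      ≤ ∫ x in a..b, c ^ M * (x⁻¹ * (-log x) ^ k) := by
        refine intervalIntegral.integral_mono_on hab
          (ContinuousOn.intervalIntegrable (by fun_prop (disch := exact hne)))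
          (ContinuousOn.intervalIntegrable (by fun_prop (disch := exact hne))) fun x hx => ?_
        have hx0 : 0 ≤ x := ha.le.trans hx.1
        have hx1 : x ≤ 1 := hx.2.trans hb1
        rw [mul_assoc]
        exact mul_le_mul_of_nonneg_right (pow_sub_div_le_pow M hc hx0 hx1)
          (mul_nonneg (inv_nonneg.mpr hx0) (neg_log_pow_nonneg k hx0 hx1))
    _ = c ^ M / (k + 1) * ((-log a) ^ (k + 1) - (-log b) ^ (k + 1)) := by
        rw [intervalIntegral.integral_const_mul, integral_inv_mul_neg_log_pow k ha hb]
        ring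

lemma le_integral_pow_sub_div_mul_inv_mul_neg_log_pow (hc : 1 / 2 ≤ c) (ha : 0 < a) (hab : a ≤ b)
    (hb1 : b ≤ 1) :
    c ^ M / (k + 1) * ((-log a) ^ (k + 1) - (-log b) ^ (k + 1) - 2 * Gamma (k + 2))
      ≤ ∫ x in a..b, (c - x / M) ^ M * x⁻¹ * (-log x) ^ k := by
  have hb : 0 < b := ha.trans_le hab
  have hne : ∀ x ∈ uIcc a b, x ≠ 0 := ne_zero_of_mem_uIcc ha hb
  have hint_weight := intervalIntegrable_inv_mul_neg_log_pow k ha hb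
  have hint_log := intervalIntegrable_neg_log_pow k ha hb
  have hc0 : 0 ≤ c ^ M := pow_nonneg (by linarith) M
  calc c ^ M / (k + 1) * ((-log a) ^ (k + 1) - (-log b) ^ (k + 1) - 2 * Gamma (k + 2))
      = c ^ M * (((-log a) ^ (k + 1) - (-log b) ^ (k + 1)) / (k + 1)) - 2 * c ^ M * k ! := by
        rw [Gamma_natCast_add_two]
        field_simp
    _ ≤ c ^ M * (∫ x in a..b, x⁻¹ * (-log x) ^ k) - 2 * c ^ M * ∫ x in a..b, (-log x) ^ k := by
        rw [integral_inv_mul_neg_log_pow k ha hb]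
        gcongr
        exact integral_neg_log_pow_le_factorial k ha hab hb1
    _ = ∫ x in a..b, (c ^ M * (x⁻¹ * (-log x) ^ k) - 2 * c ^ M * (-log x) ^ k) := by
        rw [intervalIntegral.integral_sub (hint_weight.const_mul _) (hint_log.const_mul _),
          intervalIntegral.integral_const_mul, intervalIntegral.integral_const_mul]
    _ ≤ ∫ x in a..b, (c - x / M) ^ M * x⁻¹ * (-log x) ^ k := by
        refine intervalIntegral.integral_mono_on hab
          ((hint_weight.const_mul _).sub (hint_log.const_mul _))
          (ContinuousOn.intervalIntegrable (by fun_prop (disch := exact hne))) fun x hx => ?_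
        have hx0 : 0 < x := ha.trans_le hx.1
        have hx1 : x ≤ 1 := hx.2.trans hb1
        calc c ^ M * (x⁻¹ * (-log x) ^ k) - 2 * c ^ M * (-log x) ^ k
            = c ^ M * (1 - 2 * x) * (x⁻¹ * (-log x) ^ k) := by field_simp
          _ ≤ (c - x / M) ^ M * (x⁻¹ * (-log x) ^ k) := by
            gcongr
            · exact mul_nonneg (inv_nonneg.mpr hx0.le) (neg_log_pow_nonneg k hx0.le hx1)
            · exact pow_mul_one_sub_two_mul_le M hc hx0.le hx1
          _ = (c - x / M) ^ M * x⁻¹ * (-log x) ^ k := by ring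

end

theorem crucial_log_integral_bounds_general (N n : ℕ) (hnN : n < N) (k : ℕ) (S a b : ℝ)
    (ha0 : 0 < a) (hab : a < b) (hb1 : b ≤ 1) (hS : S ≤ 1 / 2) :
    (1 - S) ^ (N - n) / ((k : ℝ) + 1) *
        ((-Real.log a) ^ (k + 1) - (-Real.log b) ^ (k + 1) - 2 * Real.Gamma ((k : ℝ) + 2))
      ≤ (∫ x in a..b, (1 - S - x / ((N : ℝ) - n)) ^ (N - n) * x⁻¹ * (-Real.log x) ^ k) ∧
    (∫ x in a..b, (1 - S - x / ((N : ℝ) - n)) ^ (N - n) * x⁻¹ * (-Real.log x) ^ k)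
      ≤ (1 - S) ^ (N - n) / ((k : ℝ) + 1) *
          ((-Real.log a) ^ (k + 1) - (-Real.log b) ^ (k + 1)) := by
  have hc : 1 / 2 ≤ 1 - S := by linarith
  rw [← Nat.cast_sub hnN.le]
  exact ⟨le_integral_pow_sub_div_mul_inv_mul_neg_log_pow (N - n) k hc ha0 hab.le hb1,
    integral_pow_sub_div_mul_inv_mul_neg_log_pow_le (N - n) k hc ha0 hab.le hb1⟩

theorem crucial_log_integral_bounds (N n m : ℕ) (hnN : n < N) (hm : 3 ≤ m) (k : ℕ)
    (α : ℝ) (hα : 0 < α) (s : ℕ → ℝ) (S a b : ℝ)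
    (ha : a = ((∏ i ∈ Finset.Icc 1 (m - 1), s i) / (α * ((N : ℝ) - n)))
        ^ (((m : ℝ) - 2)⁻¹))
    (hb : b = s (m - 1))
    (ha0 : 0 < a) (hab : a < b) (hb1 : b ≤ 1) (hS0 : 0 ≤ S) (hS : S ≤ 1 / 2) :
    (1 - S) ^ (N - n) / ((k : ℝ) + 1) *
        ((-Real.log a) ^ (k + 1) - (-Real.log b) ^ (k + 1) - 2 * Real.Gamma ((k : ℝ) + 2))
      ≤ (∫ x in a..b, (1 - S - x / ((N : ℝ) - n)) ^ (N - n) * x⁻¹ * (-Real.log x) ^ k) ∧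
    (∫ x in a..b, (1 - S - x / ((N : ℝ) - n)) ^ (N - n) * x⁻¹ * (-Real.log x) ^ k)
      ≤ (1 - S) ^ (N - n) / ((k : ℝ) + 1) *
          ((-Real.log a) ^ (k + 1) - (-Real.log b) ^ (k + 1)) :=
  crucial_log_integral_bounds_general N n hnN k S a b ha0 hab hb1 hS
end

section
/- Let q > −1 be real, k ≥ 0 an integer, 0 < a < b ≤ 1, and 0 ≤ S ≤ 1/2, N > n integers. Then ∫_a^b (1 − S − s/(N−n))^{N−n} s^q (−ln s)^k ds ≤ c_{k,q} (1−S)^{N−n} b^{q+1} (−ln b)^k + c'_{k,q} (1−S)^{N−n} b^{q+1}, where c_{k,q}, c'_{k,q} depend only on k and q; in particular the integral is at most C_{k,q}(1−S)^{N−n} b^{q+1} (1 + (−ln b)^k). -/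
/-!
Since `0 ≤ s / (N - n) ≤ 1 ≤ 2 (1 - S)`, the base `1 - S - s / (N - n)` lies in
`[-(1 - S), 1 - S]`, so the first factor is at most `(1 - S) ^ (N - n)`.
Split `s ^ q = s ^ (ε - 1) * s ^ ε` with `ε = (q + 1) / 2`. Writing `-log s = -log b + x`
with `x = log (b / s) ≥ 0` and `s ^ ε = b ^ ε * exp (-ε x)`, the bound `x ^ k * exp (-ε x) ≤ k! / ε ^ k`
controls `s ^ ε * (-log s) ^ k` by a constant times `b ^ ε * (1 + (-log b) ^ k)`.
The remaining `∫ s in a..b, s ^ (ε - 1) ≤ b ^ ε / ε` supplies the other half of `b ^ (q + 1)`.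
-/

open Real Set intervalIntegral
open scoped Nat

lemma sub_pow_le_pow {u t : ℝ} (ht : 0 ≤ t) (htu : t ≤ 2 * u) (m : ℕ) : (u - t) ^ m ≤ u ^ m := by
  have habs : |u - t| ≤ u := abs_le.2 ⟨by linarith, by linarith⟩
  calc (u - t) ^ m ≤ |u - t| ^ m := (le_abs_self _).trans (abs_pow (u - t) m).le
    _ ≤ u ^ m := pow_le_pow_left₀ (abs_nonneg _) habs m

lemma pow_mul_exp_neg_mul_le {ε x : ℝ} (hε : 0 < ε) (hx : 0 ≤ x) (k : ℕ) :
    x ^ k * exp (-(ε * x)) ≤ k ! / ε ^ k := by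
  have h := pow_div_factorial_le_exp _ (mul_nonneg hε.le hx) k
  rw [div_le_iff₀ (by positivity), mul_pow] at h
  rw [le_div_iff₀ (by positivity)]
  calc x ^ k * exp (-(ε * x)) * ε ^ k = ε ^ k * x ^ k * exp (-(ε * x)) := by ring
    _ ≤ exp (ε * x) * k ! * exp (-(ε * x)) := by gcongr
    _ = k ! := by rw [mul_right_comm, ← exp_add, add_neg_cancel, exp_zero, one_mul]

lemma rpow_mul_neg_log_pow_le {ε s b : ℝ} (hε : 0 < ε) (hs : 0 < s) (hsb : s ≤ b) (hb : b ≤ 1)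
    (k : ℕ) :
    s ^ ε * (-log s) ^ k ≤ 2 ^ (k - 1) * (1 + k ! / ε ^ k) * b ^ ε * (1 + (-log b) ^ k) := by
  have hb0 : 0 < b := hs.trans_le hsb
  set L := -log b
  set x := log b - log s with hx_def
  have hL : 0 ≤ L := neg_nonneg.2 (log_nonpos hb0.le hb)
  have hx : 0 ≤ x := sub_nonneg.2 (log_le_log hs hsb)
  have hs_eq : s ^ ε = b ^ ε * exp (-(ε * x)) := by
    rw [rpow_def_of_pos hs, rpow_def_of_pos hb0, ← exp_add, hx_def]
    ring_nf
  have hexp : exp (-(ε * x)) ≤ 1 := exp_le_one_iff.2 (by nlinarith)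
  have hxk := pow_mul_exp_neg_mul_le hε hx k
  calc s ^ ε * (-log s) ^ k = b ^ ε * (exp (-(ε * x)) * (L + x) ^ k) := by
        rw [hs_eq, show -log s = L + x by ring]; ring
    _ ≤ b ^ ε * (exp (-(ε * x)) * (2 ^ (k - 1) * (L ^ k + x ^ k))) := by
        gcongr; exact add_pow_le hL hx k
    _ = 2 ^ (k - 1) * b ^ ε * (L ^ k * exp (-(ε * x)) + x ^ k * exp (-(ε * x))) := by ring
    _ ≤ 2 ^ (k - 1) * b ^ ε * (L ^ k + k ! / ε ^ k) := by
        gcongr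
        · exact mul_le_of_le_one_right (by positivity) hexp
    _ ≤ 2 ^ (k - 1) * b ^ ε * ((1 + k ! / ε ^ k) * (1 + L ^ k)) := by
        gcongr
        nlinarith [pow_nonneg hL k, show 0 ≤ (k ! : ℝ) / ε ^ k by positivity]
    _ = 2 ^ (k - 1) * (1 + k ! / ε ^ k) * b ^ ε * (1 + L ^ k) := by ring

lemma integral_le_of_le_mul_rpow {f : ℝ → ℝ} {a b p K : ℝ} (ha : 0 ≤ a) (hab : a ≤ b)
    (hp : -1 < p) (hK : 0 ≤ K) (hf : IntervalIntegrable f MeasureTheory.volume a b)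
    (hfle : ∀ s ∈ Icc a b, f s ≤ K * s ^ p) :
    ∫ s in a..b, f s ≤ K * b ^ (p + 1) / (p + 1) := by
  have hp1 : 0 < p + 1 := by linarith
  calc ∫ s in a..b, f s ≤ ∫ s in a..b, K * s ^ p :=
        integral_mono_on hab hf ((intervalIntegrable_rpow' hp).const_mul K) hfle
    _ = K * ((b ^ (p + 1) - a ^ (p + 1)) / (p + 1)) := by
        rw [integral_const_mul, integral_rpow (Or.inl hp)]
    _ ≤ K * b ^ (p + 1) / (p + 1) := by
        rw [mul_div_assoc]
        gcongr
        exact sub_le_self _ (rpow_nonneg ha _)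

lemma noncritical_integrand_le {m : ℕ} (hm : 0 < m) {S s b q ε : ℝ} (hS : S ≤ 1 / 2)
    (hε : 0 < ε) (hs : 0 < s) (hsb : s ≤ b) (hb : b ≤ 1) (k : ℕ) :
    (1 - S - s / m) ^ m * s ^ q * (-log s) ^ k ≤
      (1 - S) ^ m * (2 ^ (k - 1) * (1 + k ! / ε ^ k) * b ^ ε * (1 + (-log b) ^ k)) *
        s ^ (q - ε) := by
  have h1S : 0 ≤ 1 - S := by linarith
  have hs1 : s ≤ 1 := hsb.trans hb
  have hfactor : (1 - S - s / m) ^ m ≤ (1 - S) ^ m := by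
    refine sub_pow_le_pow (by positivity) ?_ m
    linarith [div_le_self hs.le (Nat.one_le_cast.2 hm)]
  calc (1 - S - s / m) ^ m * s ^ q * (-log s) ^ k
      ≤ (1 - S) ^ m * s ^ q * (-log s) ^ k := by
        have : 0 ≤ -log s := neg_nonneg.2 (log_nonpos hs.le hs1)
        gcongr
    _ = (1 - S) ^ m * s ^ (q - ε) * (s ^ ε * (-log s) ^ k) := by
        rw [mul_assoc _ (s ^ (q - ε)), ← mul_assoc (s ^ (q - ε)), ← rpow_add hs, sub_add_cancel,
          mul_assoc]
    _ ≤ (1 - S) ^ m * s ^ (q - ε) *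
          (2 ^ (k - 1) * (1 + k ! / ε ^ k) * b ^ ε * (1 + (-log b) ^ k)) :=
        mul_le_mul_of_nonneg_left (rpow_mul_neg_log_pow_le hε hs hsb hb k)
          (mul_nonneg (pow_nonneg h1S _) (rpow_nonneg hs.le _))
    _ = _ := by ring

theorem noncritical_integral_bound (q : ℝ) (hq : -1 < q) (k : ℕ) :
    ∃ C : ℝ, 0 < C ∧ ∀ (N n : ℕ), n < N → ∀ (a b S : ℝ),
      0 < a → a < b → b ≤ 1 → 0 ≤ S → S ≤ 1 / 2 →
      ∫ s in a..b, (1 - S - s / ((N : ℝ) - n)) ^ (N - n) * s ^ q * (-Real.log s) ^ k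
        ≤ C * (1 - S) ^ (N - n) * b ^ (q + 1) * (1 + (-Real.log b) ^ k) := by
  set ε := (q + 1) / 2 with hε_def
  have hε : 0 < ε := half_pos (by linarith)
  set D := 2 ^ (k - 1) * (1 + k ! / ε ^ k)
  refine ⟨D / ε, by positivity, fun N n hnN a b S ha hab hb _ hS ↦ ?_⟩
  rw [← Nat.cast_sub hnN.le]
  set m := N - n
  have hb0 : 0 < b := ha.trans hab
  have hL : 0 ≤ -log b := neg_nonneg.2 (log_nonpos hb0.le hb)
  set K := (1 - S) ^ m * (D * b ^ ε * (1 + (-log b) ^ k))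
  have hK : 0 ≤ K := mul_nonneg (pow_nonneg (by linarith) _)
    (mul_nonneg (by positivity) (by linarith [pow_nonneg hL k]))
  have hint : IntervalIntegrable (fun s ↦ (1 - S - s / m) ^ m * s ^ q * (-log s) ^ k)
      MeasureTheory.volume a b := by
    have : ∀ s ∈ uIcc a b, 0 < s := fun s hs ↦ ha.trans_le (uIcc_of_le hab.le ▸ hs).1
    exact ContinuousOn.intervalIntegrable (by fun_prop (disch := grind))
  have hexp : q - ε + 1 = ε := by rw [hε_def]; ring
  calc _ ≤ K * b ^ (q - ε + 1) / (q - ε + 1) :=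
        integral_le_of_le_mul_rpow ha.le hab.le (by linarith) hK hint fun s hs ↦
          noncritical_integrand_le (Nat.sub_pos_of_lt hnN) hS hε (ha.trans_le hs.1) hs.2 hb k
    _ = D / ε * (1 - S) ^ m * (b ^ ε * b ^ ε) * (1 + (-log b) ^ k) := by
        rw [hexp]; field_simp; ring
    _ = _ := by rw [← rpow_add hb0, add_halves]
end
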